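/- Collecting all vertices of a given score into one group preserves optimality: for every k ≥ 1, if x : V → Fin k satisfies f(x) ≥ f(y) for every assignment y : V → Fin k, and i ∈ V, then the assignment x' defined by x'(v) = x(i) whenever s(v) = s(i) and x'(v) = x(v) otherwise also satisfies f(x') ≥ f(y) for every assignment y : V → Fin k. -/

import Mathlib

/-!
Vertices with the same score are twins: they have the same weight to every customer and weight
zero between each other. Moving a single vertex `v` to colour `c` changes the cut by twice the
difference of its gains `∑_b [c ≠ x b] w v b`, so in an optimal assignment every vertex already
sits in a colour of maximal gain. Twins have the same gain function, so moving one twin into the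
colour of another does not decrease the cut and keeps the assignment optimal; recolouring the
score class one vertex at a time gives the theorem.
-/

open Finset

variable {V : Type*} [Fintype V]

def wgt (s : V → ℤ × ℤ × ℤ) (i j : V) : ℤ :=
  |(s i).1 - (s j).1| + |(s i).2.1 - (s j).2.1| + |(s i).2.2 - (s j).2.2|

def objf (s : V → ℤ × ℤ × ℤ) {k : ℕ} (x : V → Fin k) : ℤ :=
  ∑ i : V, ∑ j : V, if x i ≠ x j then wgt s i j else 0

def wgt' (s : V → ℤ × ℤ × ℤ) (a b : ℤ × ℤ × ℤ) : ℤ :=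
  ∑ i ∈ univ.filter (fun i => s i = a), ∑ j ∈ univ.filter (fun j => s j = b), wgt s i j

def objR (s : V → ℤ × ℤ × ℤ) {k : ℕ} (y : ℤ × ℤ × ℤ → Fin k) : ℤ :=
  ∑ a ∈ univ.image s, ∑ b ∈ univ.image s, if y a ≠ y b then wgt' s a b else 0

section MaxCut

variable {α R : Type*} [DecidableEq α]

def cutValue [AddCommMonoid R] (w : V → V → R) (x : V → α) : R :=
  ∑ i, ∑ j, if x i ≠ x j then w i j else 0

def IsMaxCut [AddCommMonoid R] [LE R] (w : V → V → R) (x : V → α) : Prop :=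
  ∀ y : V → α, cutValue w y ≤ cutValue w x

def cutGain [AddCommMonoid R] (w : V → V → R) (x : V → α) (v : V) (c : α) : R :=
  ∑ j, if c ≠ x j then w v j else 0

variable [DecidableEq V]

theorem cutValue_update [CommRing R] {w : V → V → R} (hsymm : ∀ i j, w i j = w j i)
    (hloop : ∀ v, w v v = 0) (x : V → α) (v : V) (c : α) :
    cutValue w (Function.update x v c) =
      cutValue w x + 2 * (cutGain w x v c - cutGain w x v (x v)) := by
  set d : V → R := fun j => (if c ≠ x j then w v j else 0) - if x v ≠ x j then w v j else 0
  have hterm : ∀ i j, (if Function.update x v c i ≠ Function.update x v c j then w i j else 0) =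
      (if x i ≠ x j then w i j else 0) + (if i = v then d j else 0) +
        (if j = v then d i else 0) := by
    intro i j
    by_cases hi : i = v <;> by_cases hj : j = v
    · simp [hi, hj, d, hloop]
    · simp [hi, hj, d]
    · simp [hi, hj, d, hsymm i v, eq_comm]
    · simp [hi, hj]
  simp only [cutValue, hterm, sum_add_distrib, sum_ite_irrel, sum_const_zero, sum_ite_eq',
    mem_univ, if_true, cutGain, d, sum_sub_distrib]
  ring

variable [CommRing R] [LinearOrder R] [IsStrictOrderedRing R] {w : V → V → R}

theorem IsMaxCut.cutGain_le (hsymm : ∀ i j, w i j = w j i) (hloop : ∀ v, w v v = 0)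
    {x : V → α} (hx : IsMaxCut w x) (v : V) (c : α) :
    cutGain w x v c ≤ cutGain w x v (x v) := by
  have h := hx (Function.update x v c)
  rw [cutValue_update hsymm hloop] at h
  linarith

theorem IsMaxCut.update_twin (hsymm : ∀ i j, w i j = w j i) (hloop : ∀ v, w v v = 0)
    {x : V → α} (hx : IsMaxCut w x) {u v : V} (htwin : ∀ b, w v b = w u b) :
    IsMaxCut w (Function.update x v (x u)) := by
  have hgain : cutGain w x v = cutGain w x u := by
    funext c
    simp only [cutGain, htwin]
  have hle := hx.cutGain_le hsymm hloop u (x v)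
  intro y
  rw [cutValue_update hsymm hloop, hgain]
  linarith [hx y]

theorem IsMaxCut.recolor_twins (hsymm : ∀ i j, w i j = w j i) (hloop : ∀ v, w v v = 0)
    {x : V → α} (hx : IsMaxCut w x) (u : V) (S : Finset V)
    (htwin : ∀ v ∈ S, ∀ b, w v b = w u b) :
    IsMaxCut w (fun v => if v ∈ S then x u else x v) := by
  induction S using Finset.induction_on with
  | empty => simpa using hx
  | insert a S ha ih =>
    have hrecolor : (fun v => if v ∈ insert a S then x u else x v) =
        Function.update (fun v => if v ∈ S then x u else x v) a (x u) := by
      funext v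
      by_cases hv : v = a <;> simp [hv, ha]
    rw [hrecolor]
    convert (ih fun v hv => htwin v (mem_insert_of_mem hv)).update_twin hsymm hloop
      (htwin a (mem_insert_self a S)) using 2
    simp

end MaxCut

omit [Fintype V] in
theorem wgt_comm (s : V → ℤ × ℤ × ℤ) (i j : V) : wgt s i j = wgt s j i := by
  rw [wgt, wgt, abs_sub_comm (s i).1, abs_sub_comm (s i).2.1, abs_sub_comm (s i).2.2]

omit [Fintype V] in
theorem wgt_self (s : V → ℤ × ℤ × ℤ) (v : V) : wgt s v v = 0 := by
  simp [wgt]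

omit [Fintype V] in
theorem wgt_congr_left {s : V → ℤ × ℤ × ℤ} {u v : V} (h : s v = s u) (b : V) :
    wgt s v b = wgt s u b := by
  simp [wgt, h]

theorem collect_score_class_preserves_optimality_general (s : V → ℤ × ℤ × ℤ) (k : ℕ)
    (x : V → Fin k) (hopt : ∀ y : V → Fin k, objf s x ≥ objf s y) (i : V) :
    ∀ y : V → Fin k, objf s (fun v => if s v = s i then x i else x v) ≥ objf s y := by
  classical
  have h := IsMaxCut.recolor_twins (w := wgt s) (wgt_comm s) (wgt_self s) hopt i
    (univ.filter fun v => s v = s i) fun v hv => wgt_congr_left (mem_filter.1 hv).2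
  simp only [mem_filter, mem_univ, true_and] at h
  exact h

/-- Collecting all vertices of a given score into one group preserves optimality. -/
theorem collect_score_class_preserves_optimality (s : V → ℤ × ℤ × ℤ) (k : ℕ) (hk : 1 ≤ k)
    (x : V → Fin k) (hopt : ∀ y : V → Fin k, objf s x ≥ objf s y) (i : V) :
    ∀ y : V → Fin k, objf s (fun v => if s v = s i then x i else x v) ≥ objf s y :=
  collect_score_class_preserves_optimality_general s k x hopt i
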